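/- Let ψ(z) = exp((z + 1)/(z − 1))·exp((z − 1)/(z + 1)) = exp(2(z² + 1)/(z² − 1)) for z ∈ 𝔻, and let φ ∈ Aut(𝔻). Then the composition operator C_φ (f ↦ f ∘ φ) is a well-defined algebra automorphism of ψH^∞ if and only if φ(z) = z for all z ∈ 𝔻 or φ(z) = −z for all z ∈ 𝔻. -/

import Mathlib

open Complex Metric Set

local notation "𝔻" => Complex.UnitDisc

/-- The closed unit disc, as a subset of `ℂ`. -/
def cD : Set ℂ := Metric.closedBall 0 1

/-- A function on the open unit disc is analytic (holomorphic):
it is the restriction of a function differentiable on the open unit ball. -/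
def HolOn (f : 𝔻 → ℂ) : Prop :=
  ∃ F : ℂ → ℂ, DifferentiableOn ℂ F (Metric.ball 0 1) ∧ ∀ z : 𝔻, F ↑z = f z

/-- Membership in `H^∞`, the algebra of bounded analytic functions on the unit disc. -/
def MemHinf (f : 𝔻 → ℂ) : Prop :=
  HolOn f ∧ ∃ M : ℝ, ∀ z : 𝔻, ‖f z‖ ≤ M

/-- Membership in the disc algebra `A(𝔻)`: continuous on the closed unit disc,
analytic in its interior. -/
def MemDiscAlg (f : ↥cD → ℂ) : Prop :=
  ∃ F : ℂ → ℂ, ContinuousOn F cD ∧ DifferentiableOn ℂ F (Metric.ball 0 1) ∧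
    ∀ z : ↥cD, F ↑z = f z

/-- `φ ∈ Aut(𝔻)`: a bijective analytic self-map of the unit disc. -/
def IsDiscAut (φ : 𝔻 → 𝔻) : Prop :=
  (∃ F : ℂ → ℂ, DifferentiableOn ℂ F (Metric.ball 0 1) ∧ ∀ z : 𝔻, F ↑z = ↑(φ z)) ∧
  Function.Bijective φ

/-- A Möbius automorphism of the unit disc, given by its global formula
`Φ z = η (a - z) / (1 - conj a * z)` with `|a| < 1`, `|η| = 1`; this is the analytic
extension to (a neighbourhood of) the closed unit disc of a disc automorphism. -/
def IsMobius (Φ : ℂ → ℂ) : Prop :=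
  ∃ a η : ℂ, ‖a‖ < 1 ∧ ‖η‖ = 1 ∧
    ∀ z : ℂ, Φ z = η * (a - z) / (1 - (starRingEnd ℂ) a * z)

/-- `T` is an algebra automorphism of the set `A` of complex-valued functions:
a bijective, `ℂ`-linear and multiplicative self-map of `A`. -/
def IsAlgAutOn {ι : Type} (A : Set (ι → ℂ)) (T : (ι → ℂ) → (ι → ℂ)) : Prop :=
  (∀ f ∈ A, T f ∈ A) ∧
  (∀ f ∈ A, ∀ g ∈ A, T (f + g) = T f + T g) ∧
  (∀ (c : ℂ), ∀ f ∈ A, T (c • f) = c • T f) ∧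
  (∀ f ∈ A, ∀ g ∈ A, T (f * g) = T f * T g) ∧
  Set.InjOn T A ∧ Set.SurjOn T A A

/-- The subalgebra `ψ H^∞ = {ψ · g : g ∈ H^∞}`. -/
def psiH (ψ : 𝔻 → ℂ) : Set (𝔻 → ℂ) :=
  {f | ∃ g, MemHinf g ∧ f = fun z => ψ z * g z}

/-- The subalgebra `ψ A(𝔻) = {ψ · g : g ∈ A(𝔻)}`. -/
def psiA (ψ : ↥cD → ℂ) : Set (↥cD → ℂ) :=
  {f | ∃ g, MemDiscAlg g ∧ f = fun z => ψ z * g z}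

/-- The composition operator `C_φ : f ↦ f ∘ φ` is a well-defined algebra automorphism
of the set `A` (it is automatically linear and multiplicative). -/
def CompAutOn (A : Set (𝔻 → ℂ)) (φ : 𝔻 → 𝔻) : Prop :=
  (∀ f ∈ A, f ∘ φ ∈ A) ∧ Set.InjOn (fun f => f ∘ φ) A ∧ Set.SurjOn (fun f => f ∘ φ) A A

/-- The Möbius factor `τ_a(z) = (a - z)/(1 - conj a · z)`. -/
noncomputable def mobius (a z : ℂ) : ℂ := (a - z) / (1 - (starRingEnd ℂ) a * z)

/-- `f` has a zero of order (multiplicity) `k` at `w`: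
`f z = (z - w)^k g z` with `g` analytic and `g w ≠ 0`. -/
def ZeroOrderAt (f : 𝔻 → ℂ) (w : 𝔻) (k : ℕ) : Prop :=
  ∃ g : 𝔻 → ℂ, HolOn g ∧ g w ≠ 0 ∧ ∀ z : 𝔻, f z = ((z : ℂ) - (w : ℂ)) ^ k * g z

/-- `g` is an invertible element of `H^∞`. -/
def InvHinf (g : 𝔻 → ℂ) : Prop :=
  MemHinf g ∧ ∃ h : 𝔻 → ℂ, MemHinf h ∧ ∀ z, g z * h z = 1

/-- `g` is an invertible element of the disc algebra `A(𝔻)`. -/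
def InvDiscAlg (g : ↥cD → ℂ) : Prop :=
  MemDiscAlg g ∧ ∃ h : ↥cD → ℂ, MemDiscAlg h ∧ ∀ z, g z * h z = 1

/-!
Since `|ψ| = exp (-ρ)` with `ρ = P(·, 1) + P(·, -1)` the sum of the Poisson kernels of the atoms
at `±1`, the operator `C_φ` can only be an automorphism of `ψ H^∞` if `ψ ∘ φ / ψ` and `ψ / ψ ∘ φ`
are bounded, that is, if `ρ ∘ φ - ρ` is bounded. A disc automorphism is a Möbius map
`φ z = η (a - z) / (1 - conj a z)`: normalised to fix `0`, both it and its (holomorphic) inverse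
satisfy Schwarz's lemma, so it is a rotation. Along the radius `r → 1⁻` we have `ρ r → ∞`, which
forces `φ 1 = ±1`; the Poisson kernel at `φ 1` then transforms as
`P(φ r, φ 1) = |1 - a|² / (1 - |a|²) · P(r, 1)`, and boundedness forces this factor to be `1`,
that is `Re a = |a|²`. The same argument for `z ↦ φ (-z)` gives `Re (-a) = |a|²`, hence `a = 0` and
`φ = ±id`. Conversely, `ψ` is even, so `z ↦ ±z` induce automorphisms.
-/

open ComplexConjugate Filter Topology

section Mobius

variable {a : ℂ}

lemma normSq_one_sub_conj_mul_sub_normSq_sub (a z : ℂ) :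
    normSq (1 - conj a * z) - normSq (a - z) = (1 - normSq a) * (1 - normSq z) := by
  simp only [normSq_apply, mul_re, mul_im, sub_re, sub_im, one_re, one_im, conj_re, conj_im]
  ring

lemma one_sub_conj_mul_ne_zero (ha : ‖a‖ < 1) {z : ℂ} (hz : ‖z‖ ≤ 1) :
    1 - conj a * z ≠ 0 := by
  intro h
  have h1 : ‖conj a * z‖ = 1 := by rw [← sub_eq_zero.mp h, norm_one]
  rw [norm_mul, Complex.norm_conj] at h1
  nlinarith [norm_nonneg a, norm_nonneg z]

lemma norm_mobius_lt_one (ha : ‖a‖ < 1) {z : ℂ} (hz : ‖z‖ < 1) : ‖mobius a z‖ < 1 := by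
  have hd := one_sub_conj_mul_ne_zero ha hz.le
  have key := normSq_one_sub_conj_mul_sub_normSq_sub a z
  have hpos : 0 < (1 - normSq a) * (1 - normSq z) := by
    rw [normSq_eq_norm_sq, normSq_eq_norm_sq]
    exact mul_pos (by nlinarith [norm_nonneg a]) (by nlinarith [norm_nonneg z])
  rw [mobius, norm_div, div_lt_one (norm_pos_iff.mpr hd)]
  rw [normSq_eq_norm_sq, normSq_eq_norm_sq] at key
  nlinarith [norm_nonneg (a - z), norm_nonneg (1 - conj a * z)]

lemma norm_mobius_of_norm_eq_one (ha : ‖a‖ < 1) {ζ : ℂ} (hζ : ‖ζ‖ = 1) : ‖mobius a ζ‖ = 1 := by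
  have hd := one_sub_conj_mul_ne_zero ha hζ.le
  have key := normSq_one_sub_conj_mul_sub_normSq_sub a ζ
  rw [normSq_eq_norm_sq ζ, hζ, normSq_eq_norm_sq, normSq_eq_norm_sq] at key
  rw [mobius, norm_div, div_eq_one_iff_eq (norm_ne_zero_iff.mpr hd)]
  nlinarith [norm_nonneg (a - ζ), norm_nonneg (1 - conj a * ζ)]

lemma mobius_mobius (ha : ‖a‖ < 1) {z : ℂ} (hz : 1 - conj a * z ≠ 0) :
    mobius a (mobius a z) = z := by
  have hm : mobius a z * (1 - conj a * z) = a - z := div_mul_cancel₀ _ hz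
  have hd : (1 - conj a * mobius a z) * (1 - conj a * z) = 1 - conj a * a := by
    linear_combination (-conj a) * hm
  have hd' : 1 - conj a * mobius a z ≠ 0 :=
    left_ne_zero_of_mul (hd ▸ one_sub_conj_mul_ne_zero ha ha.le)
  rw [mobius, div_eq_iff hd']
  linear_combination (-1 : ℂ) * hm

lemma mapsTo_mobius (ha : ‖a‖ < 1) : MapsTo (mobius a) (ball 0 1) (ball 0 1) := fun _ hz =>
  mem_ball_zero_iff.mpr (norm_mobius_lt_one ha (mem_ball_zero_iff.mp hz))

lemma bijOn_mobius (ha : ‖a‖ < 1) : BijOn (mobius a) (ball 0 1) (ball 0 1) := by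
  have hinv : LeftInvOn (mobius a) (mobius a) (ball 0 1) := fun z hz =>
    mobius_mobius ha (one_sub_conj_mul_ne_zero ha (mem_ball_zero_iff.mp hz).le)
  exact InvOn.bijOn ⟨hinv, hinv⟩ (mapsTo_mobius ha) (mapsTo_mobius ha)

lemma differentiableOn_mobius (ha : ‖a‖ < 1) : DifferentiableOn ℂ (mobius a) (ball 0 1) :=
  ((differentiableOn_const a).sub differentiableOn_id).div
    ((differentiableOn_const 1).sub ((differentiableOn_const _).mul differentiableOn_id))
    fun _ hz => one_sub_conj_mul_ne_zero ha (mem_ball_zero_iff.mp hz).le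

lemma continuousAt_mobius (ha : ‖a‖ < 1) {ζ : ℂ} (hζ : ‖ζ‖ ≤ 1) : ContinuousAt (mobius a) ζ :=
  (continuousAt_const.sub continuousAt_id).div
    (continuousAt_const.sub (continuousAt_const.mul continuousAt_id))
    (one_sub_conj_mul_ne_zero ha hζ)

lemma mul_mobius_neg (a η z : ℂ) : η * mobius a (-z) = -η * mobius (-a) z := by
  simp only [mobius, map_neg]
  rw [show (1 : ℂ) - -conj a * z = 1 - conj a * -z by ring, show -a - z = -(a - -z) by ring]
  ring

end Mobius

section InverseFunction

variable {G H : ℂ → ℂ} {U V : Set ℂ}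

lemma Set.InjOn.not_eventually_eq {z₀ : ℂ} (hinj : InjOn G U) (hU : U ∈ 𝓝 z₀) :
    ¬ ∀ᶠ z in 𝓝 z₀, G z = G z₀ := by
  intro h
  obtain ⟨z, ⟨hGz, hzU⟩, hz⟩ :=
    (((h.and hU).filter_mono nhdsWithin_le_nhds).and (self_mem_nhdsWithin (s := {z₀}ᶜ))).exists
  exact hz (hinj hzU (mem_of_mem_nhds hU) hGz)

lemma eventually_deriv_ne_zero_of_injOn (hU : IsOpen U) (hG : DifferentiableOn ℂ G U)
    (hinj : InjOn G U) {z₀ : ℂ} (hz₀ : z₀ ∈ U) : ∀ᶠ z in 𝓝[≠] z₀, deriv G z ≠ 0 := by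
  have hGa := hG.analyticAt (hU.mem_nhds hz₀)
  refine hGa.deriv.eventually_eq_zero_or_eventually_ne_zero.resolve_left fun h => ?_
  have htop := hGa.analyticOrderAt_deriv_add_one
  rw [analyticOrderAt_eq_top.mpr h, top_add, eq_comm, analyticOrderAt_eq_top] at htop
  exact hinj.not_eventually_eq (hU.mem_nhds hz₀) (htop.mono fun z hz => sub_eq_zero.mp hz)

lemma continuousAt_of_leftInverse (hU : IsOpen U) (hV : IsOpen V) (hG : DifferentiableOn ℂ G U)
    (hinj : InjOn G U) (hH : MapsTo H V U) (hGH : ∀ w ∈ V, G (H w) = w) {w : ℂ} (hw : w ∈ V) :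
    ContinuousAt H w := by
  have hGa := hG.analyticAt (hU.mem_nhds (hH hw))
  rcases hGa.eventually_constant_or_nhds_le_map_nhds with h | h
  · exact absurd h (hinj.not_eventually_eq (hU.mem_nhds (hH hw)))
  intro S hS
  rw [hGH w hw] at h
  rw [mem_map]
  filter_upwards [h (image_mem_map (inter_mem hS (hU.mem_nhds (hH hw)))), hV.mem_nhds hw]
  rintro _ ⟨z, ⟨hzS, hzU⟩, rfl⟩ hGz
  rwa [mem_preimage, hinj (hH hGz) hzU (hGH _ hGz)]

lemma differentiableAt_of_leftInverse (hU : IsOpen U) (hV : IsOpen V)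
    (hG : DifferentiableOn ℂ G U) (hinj : InjOn G U) (hH : MapsTo H V U)
    (hGH : ∀ w ∈ V, G (H w) = w) {w : ℂ} (hw : w ∈ V) (hd : deriv G (H w) ≠ 0) :
    DifferentiableAt ℂ H w :=
  (HasDerivAt.of_local_left_inverse (continuousAt_of_leftInverse hU hV hG hinj hH hGH hw)
    (hG.differentiableAt (hU.mem_nhds (hH hw))).hasDerivAt hd
    (eventually_of_mem (hV.mem_nhds hw) hGH)).differentiableAt

/-- The inverse of an injective holomorphic map is holomorphic: away from the isolated critical
points of `G` this is the inverse function theorem, and the critical values are removable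
singularities of the continuous map `H`. -/
theorem differentiableOn_of_leftInverse (hU : IsOpen U) (hV : IsOpen V)
    (hG : DifferentiableOn ℂ G U) (hinj : InjOn G U) (hH : MapsTo H V U)
    (hGH : ∀ w ∈ V, G (H w) = w) : DifferentiableOn ℂ H V := by
  intro w hw
  have hc := continuousAt_of_leftInverse hU hV hG hinj hH hGH hw
  have hcrit := eventually_deriv_ne_zero_of_injOn hU hG hinj (hH hw)
  rw [eventually_nhdsWithin_iff] at hcrit
  set s := {w' | w' ∈ V ∧ (H w' ≠ H w → deriv G (H w') ≠ 0)}
  have hs : s ∈ 𝓝 w := inter_mem (hV.mem_nhds hw) (hc.eventually hcrit)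
  have hds : DifferentiableOn ℂ H (s \ {w}) := by
    rintro w' ⟨⟨hw'V, hw'd⟩, hne⟩
    refine (differentiableAt_of_leftInverse hU hV hG hinj hH hGH hw'V
      (hw'd fun h => hne ?_)).differentiableWithinAt
    rw [mem_singleton_iff, ← hGH w' hw'V, h, hGH w hw]
  exact (((differentiableOn_compl_singleton_and_continuousAt_iff hs).mp
    ⟨hds, hc⟩).differentiableAt hs).differentiableWithinAt

end InverseFunction

section DiscAutomorphism

theorem exists_eqOn_mul_of_bijOn_ball {G : ℂ → ℂ} (hG : DifferentiableOn ℂ G (ball 0 1))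
    (hbij : BijOn G (ball 0 1) (ball 0 1)) (h0 : G 0 = 0) :
    ∃ η : ℂ, ‖η‖ = 1 ∧ EqOn G (η * ·) (ball 0 1) := by
  set H := Function.invFunOn G (ball 0 1)
  have hinv : InvOn H G (ball 0 1) (ball 0 1) := hbij.invOn_invFunOn
  have hH : MapsTo H (ball 0 1) (ball 0 1) := hbij.surjOn.mapsTo_invFunOn
  have hHd : DifferentiableOn ℂ H (ball 0 1) :=
    differentiableOn_of_leftInverse isOpen_ball isOpen_ball hG hbij.injOn hH hinv.2
  have hH0 : H 0 = 0 := by simpa [h0] using hinv.1 (mem_ball_self one_pos)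
  have hnorm : ∀ z ∈ ball (0 : ℂ) 1, ‖G z‖ = ‖z‖ := by
    intro z hz
    have hGz := norm_le_norm_of_mapsTo_ball hG (hbij.mapsTo.mono_right ball_subset_closedBall) h0
      (mem_ball_zero_iff.mp hz)
    have hHGz := norm_le_norm_of_mapsTo_ball hHd (hH.mono_right ball_subset_closedBall) hH0
      (mem_ball_zero_iff.mp (hbij.mapsTo hz))
    rw [hinv.1 hz] at hHGz
    exact le_antisymm hGz hHGz
  have hhalf : (1 / 2 : ℂ) ∈ ball (0 : ℂ) 1 := by rw [mem_ball_zero_iff]; norm_num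
  obtain ⟨C, hC, heq⟩ := affine_of_mapsTo_ball_of_exists_norm_dslope_eq_div' hG
    (by rw [h0]; exact hbij.mapsTo.mono_right ball_subset_closedBall)
    ⟨1 / 2, hhalf, by
      rw [dslope_of_ne _ (by norm_num), slope_def_field, h0, sub_zero, sub_zero, norm_div,
        hnorm _ hhalf, div_self (by norm_num), div_one]⟩
  refine ⟨C, by simpa using hC, fun z hz => ?_⟩
  simpa [h0, mul_comm] using heq hz

lemma bijOn_ball_of_bijective {F : ℂ → ℂ} {φ : 𝔻 → 𝔻} (hF : ∀ z : 𝔻, F z = φ z)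
    (hφ : Function.Bijective φ) : BijOn F (ball 0 1) (ball 0 1) := by
  have key : ∀ z (hz : z ∈ ball (0 : ℂ) 1), F z = φ (.mk z (mem_ball_zero_iff.mp hz)) :=
    fun z hz => hF (.mk z (mem_ball_zero_iff.mp hz))
  refine ⟨fun z hz => ?_, fun z₁ h₁ z₂ h₂ h => ?_, fun w hw => ?_⟩
  · rw [key z hz]
    exact mem_ball_zero_iff.mpr (φ _).norm_lt_one
  · refine (UnitDisc.mk_inj (mem_ball_zero_iff.mp h₁) (mem_ball_zero_iff.mp h₂)).mp
      (hφ.1 (UnitDisc.coe_injective ?_))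
    rw [← key z₁ h₁, ← key z₂ h₂, h]
  · obtain ⟨z, hz⟩ := hφ.2 (.mk w (mem_ball_zero_iff.mp hw))
    exact ⟨z, mem_ball_zero_iff.mpr z.norm_lt_one, by rw [hF, hz, UnitDisc.coe_mk]⟩

theorem IsDiscAut.exists_eq_mul_mobius {φ : 𝔻 → 𝔻} (hφ : IsDiscAut φ) :
    ∃ a η : ℂ, ‖a‖ < 1 ∧ ‖η‖ = 1 ∧ ∀ z : 𝔻, (φ z : ℂ) = η * mobius a z := by
  obtain ⟨⟨F, hFd, hF⟩, hbij⟩ := hφ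
  obtain ⟨z₀, hz₀⟩ := hbij.2 0
  have ha : ‖(z₀ : ℂ)‖ < 1 := z₀.norm_lt_one
  obtain ⟨η, hη, hrot⟩ := exists_eqOn_mul_of_bijOn_ball
    (hFd.comp (differentiableOn_mobius ha) (mapsTo_mobius ha))
    ((bijOn_ball_of_bijective hF hbij).comp (bijOn_mobius ha))
    (by simp [mobius, hF, hz₀])
  refine ⟨z₀, η, ha, hη, fun z => ?_⟩
  have hz : (z : ℂ) ∈ ball (0 : ℂ) 1 := mem_ball_zero_iff.mpr z.norm_lt_one
  have h := hrot (mapsTo_mobius ha hz)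
  rw [Function.comp_apply, mobius_mobius ha (one_sub_conj_mul_ne_zero ha z.norm_lt_one.le)] at h
  rw [← hF, h]

end DiscAutomorphism

section PoissonKernel

lemma poissonKernel_zero (w ξ : ℂ) : poissonKernel 0 w ξ = (‖ξ‖ ^ 2 - ‖w‖ ^ 2) / ‖ξ - w‖ ^ 2 := by
  simp [poissonKernel]

lemma poissonKernel_zero_eq_re (w ξ : ℂ) : poissonKernel 0 w ξ = ((ξ + w) / (ξ - w)).re := by
  simpa [herglotzRieszKernel] using
    congrFun (poissonKernel_eq_re_herglotzRieszKernel (c := 0) (w := w)) ξ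

lemma poissonKernel_zero_neg (w ξ : ℂ) : poissonKernel 0 (-w) ξ = poissonKernel 0 w (-ξ) := by
  rw [poissonKernel_zero, poissonKernel_zero, norm_neg, norm_neg,
    show ξ - -w = -(-ξ - w) by ring, norm_neg]

lemma poissonKernel_zero_ofReal_one {r : ℝ} (hr : r ≠ 1) :
    poissonKernel 0 (r : ℂ) 1 = (1 + r) / (1 - r) := by
  have h : (1 : ℂ) - r = ((1 - r : ℝ) : ℂ) := by push_cast; ring
  have hr' : 1 - r ≠ 0 := sub_ne_zero.mpr hr.symm
  rw [poissonKernel_zero, h, norm_real, norm_real, norm_one, Real.norm_eq_abs, Real.norm_eq_abs,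
    sq_abs, sq_abs]
  field_simp
  ring

lemma poissonKernel_zero_mul_mobius {a η ξ z : ℂ} (hη : ‖η‖ = 1) (hξ : ‖ξ‖ = 1)
    (hz : 1 - conj a * z ≠ 0) :
    poissonKernel 0 (η * mobius a z) ξ =
      (1 - ‖a‖ ^ 2) * (1 - ‖z‖ ^ 2) / ‖ξ * (1 - conj a * z) - η * (a - z)‖ ^ 2 := by
  have hd : ‖1 - conj a * z‖ ^ 2 ≠ 0 := by positivity
  have key := normSq_one_sub_conj_mul_sub_normSq_sub a z
  simp only [normSq_eq_norm_sq] at key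
  have hsub : ξ - η * mobius a z = (ξ * (1 - conj a * z) - η * (a - z)) / (1 - conj a * z) := by
    rw [mobius, eq_div_iff hz, sub_mul, mul_assoc, div_mul_cancel₀ _ hz]
  have hnum : ‖ξ‖ ^ 2 - ‖η * mobius a z‖ ^ 2 =
      (1 - ‖a‖ ^ 2) * (1 - ‖z‖ ^ 2) / ‖1 - conj a * z‖ ^ 2 := by
    rw [hξ, norm_mul, hη, one_mul, mobius, norm_div, div_pow, eq_div_iff hd, ← key, one_pow,
      sub_mul, one_mul, div_mul_cancel₀ _ hd]
  rw [poissonKernel_zero, hsub, hnum, norm_div, div_pow, div_div_div_cancel_right₀ hd]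

lemma poissonKernel_zero_mul_mobius_of_mul_mobius_one_eq_one {a η z : ℂ} (ha : ‖a‖ < 1)
    (hη : ‖η‖ = 1) (hfix : η * mobius a 1 = 1) (hz : 1 - conj a * z ≠ 0) :
    poissonKernel 0 (η * mobius a z) 1 = ‖1 - a‖ ^ 2 / (1 - ‖a‖ ^ 2) * poissonKernel 0 z 1 := by
  have h1a : 1 - conj a ≠ 0 := by simpa using one_sub_conj_mul_ne_zero ha norm_one.le
  have h1a' : 1 - a ≠ 0 := fun h => by
    rw [← sub_eq_zero.mp h, norm_one] at ha
    exact lt_irrefl _ ha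
  have hlin :
      (1 - conj a * z) - η * (a - z) = (1 - z) * ((1 - ‖a‖ ^ 2 : ℝ) : ℂ) / (1 - a) := by
    rw [mobius, mul_one, ← mul_div_assoc, div_eq_one_iff_eq h1a] at hfix
    rw [eq_div_iff h1a', ofReal_sub, ofReal_one, ofReal_pow, ← Complex.conj_mul']
    linear_combination (a - z) * hfix
  have hpos : 0 < 1 - ‖a‖ ^ 2 := by nlinarith [norm_nonneg a]
  rw [poissonKernel_zero_mul_mobius hη norm_one hz, one_mul, hlin, poissonKernel_zero, norm_one,
    one_pow, norm_div, norm_mul, norm_real, Real.norm_of_nonneg hpos.le]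
  have : ‖1 - a‖ ≠ 0 := norm_ne_zero_iff.mpr h1a'
  field_simp

end PoissonKernel

section Limits

lemma tendsto_poissonKernel_zero_of_ne {ζ ξ : ℂ} (hζ : ‖ζ‖ = ‖ξ‖) (hne : ζ ≠ ξ) :
    Tendsto (fun w => poissonKernel 0 w ξ) (𝓝 ζ) (𝓝 0) := by
  have hc : ContinuousAt (fun w : ℂ => (‖ξ‖ ^ 2 - ‖w‖ ^ 2) / ‖ξ - w‖ ^ 2) ζ :=
    ContinuousAt.div (by fun_prop) (by fun_prop) (by simpa [sub_eq_zero] using hne.symm)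
  simpa [poissonKernel_zero, hζ] using hc.tendsto

lemma tendsto_ofReal_nhdsLT_one : Tendsto (fun r : ℝ => (r : ℂ)) (𝓝[<] 1) (𝓝 1) := by
  simpa using (continuous_ofReal.tendsto (1 : ℝ)).mono_left nhdsWithin_le_nhds

lemma tendsto_poissonKernel_zero_ofReal_one :
    Tendsto (fun r : ℝ => poissonKernel 0 (r : ℂ) 1) (𝓝[<] 1) atTop := by
  have h1 : Tendsto (fun r : ℝ => 1 - r) (𝓝[<] 1) (𝓝[>] 0) := by
    refine tendsto_nhdsWithin_of_tendsto_nhds_of_eventually_within _ ?_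
      (eventually_nhdsWithin_of_forall fun r hr => sub_pos.mpr (mem_Iio.mp hr))
    have h : Tendsto (fun r : ℝ => 1 - r) (𝓝 1) (𝓝 (1 - 1)) := tendsto_const_nhds.sub tendsto_id
    rw [sub_self] at h
    exact h.mono_left nhdsWithin_le_nhds
  have h2 : Tendsto (fun r : ℝ => 1 + r) (𝓝[<] 1) (𝓝 2) := by
    have h : Tendsto (fun r : ℝ => 1 + r) (𝓝 1) (𝓝 (1 + 1)) := tendsto_const_nhds.add tendsto_id
    rw [one_add_one_eq_two] at h
    exact h.mono_left nhdsWithin_le_nhds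
  refine (h2.pos_mul_atTop two_pos (tendsto_inv_nhdsGT_zero.comp h1)).congr' ?_
  filter_upwards [self_mem_nhdsWithin] with r hr
  rw [poissonKernel_zero_ofReal_one (ne_of_lt hr), Function.comp_apply, div_eq_mul_inv]

end Limits

noncomputable def rho (w : ℂ) : ℝ := poissonKernel 0 w 1 + poissonKernel 0 w (-1)

lemma rho_neg (w : ℂ) : rho (-w) = rho w := by
  rw [rho, rho, poissonKernel_zero_neg, poissonKernel_zero_neg, neg_neg, add_comm]

lemma tendsto_rho_ofReal_one : Tendsto (fun r : ℝ => rho r) (𝓝[<] 1) atTop :=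
  tendsto_poissonKernel_zero_ofReal_one.atTop_add
    ((tendsto_poissonKernel_zero_of_ne (by simp) (by norm_num)).comp tendsto_ofReal_nhdsLT_one)

section Rigidity

variable {a η : ℂ} {K : ℝ}

lemma eventually_nhdsLT_one_of_forall_norm_lt_one {p : ℂ → Prop} (h : ∀ z : ℂ, ‖z‖ < 1 → p z) :
    ∀ᶠ r : ℝ in 𝓝[<] 1, p r := by
  filter_upwards [Ioo_mem_nhdsLT (show (-1 : ℝ) < 1 by norm_num)] with r hr
  exact h r (by rw [norm_real, Real.norm_eq_abs, abs_lt]; exact hr)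

lemma tendsto_mul_mobius_ofReal_one (ha : ‖a‖ < 1) :
    Tendsto (fun r : ℝ => η * mobius a r) (𝓝[<] 1) (𝓝 (η * mobius a 1)) :=
  (continuousAt_const.mul (continuousAt_mobius ha (by simp))).tendsto.comp
    tendsto_ofReal_nhdsLT_one

lemma norm_mul_mobius_one (ha : ‖a‖ < 1) (hη : ‖η‖ = 1) : ‖η * mobius a 1‖ = 1 := by
  rw [norm_mul, hη, norm_mobius_of_norm_eq_one ha norm_one, one_mul]

lemma mul_mobius_one_eq_one_or_neg_one_of_abs_rho_sub_le (ha : ‖a‖ < 1) (hη : ‖η‖ = 1)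
    (hK : ∀ᶠ r : ℝ in 𝓝[<] 1, |rho (η * mobius a r) - rho r| ≤ K) :
    η * mobius a 1 = 1 ∨ η * mobius a 1 = -1 := by
  by_contra! h
  have hnorm := norm_mul_mobius_one ha hη
  -- if `φ 1 ≠ ±1`, both atoms of `rho` stay away from `φ r` as `r → 1`
  have h0 : Tendsto (fun r : ℝ => rho (η * mobius a r)) (𝓝[<] 1) (𝓝 0) := by
    have h₁ := tendsto_poissonKernel_zero_of_ne (by simpa using hnorm) h.1
    have h₂ := tendsto_poissonKernel_zero_of_ne (by simpa using hnorm) h.2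
    simpa [rho, Function.comp_def] using (h₁.add h₂).comp (tendsto_mul_mobius_ofReal_one ha)
  obtain ⟨r, hr, hrK, hr0⟩ := ((tendsto_rho_ofReal_one.eventually_gt_atTop (K + 1)).and
    (hK.and (h0.eventually (gt_mem_nhds one_pos)))).exists
  linarith [(abs_le.mp hrK).1]

lemma normSq_eq_re_of_mul_mobius_one_eq_one (ha : ‖a‖ < 1) (hη : ‖η‖ = 1)
    (hfix : η * mobius a 1 = 1)
    (hK : ∀ᶠ r : ℝ in 𝓝[<] 1, |rho (η * mobius a r) - rho r| ≤ K) :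
    normSq a = a.re := by
  set c := ‖1 - a‖ ^ 2 / (1 - ‖a‖ ^ 2)
  set s : ℝ → ℝ := fun r => poissonKernel 0 (η * mobius a r) (-1) - poissonKernel 0 r (-1)
  have hc : c = 1 := by
    by_contra hc
    have hsplit : ∀ᶠ r : ℝ in 𝓝[<] 1,
        (c - 1) * poissonKernel 0 r 1 = (rho (η * mobius a r) - rho r) - s r :=
      eventually_nhdsLT_one_of_forall_norm_lt_one
        (p := fun z => (c - 1) * poissonKernel 0 z 1 = (rho (η * mobius a z) - rho z) -
          (poissonKernel 0 (η * mobius a z) (-1) - poissonKernel 0 z (-1))) fun z hz => by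
        rw [rho, rho, poissonKernel_zero_mul_mobius_of_mul_mobius_one_eq_one ha hη hfix
          (one_sub_conj_mul_ne_zero ha hz.le)]
        ring
    -- the atom at `-1` stays away from both `r` and `φ r → φ 1 = 1`
    have hs : Tendsto s (𝓝[<] 1) (𝓝 0) := by
      have hφ := (tendsto_poissonKernel_zero_of_ne (ξ := -1)
        (by rw [norm_mul_mobius_one ha hη, norm_neg, norm_one]) (by rw [hfix]; norm_num)).comp
        (tendsto_mul_mobius_ofReal_one ha)
      have hid := (tendsto_poissonKernel_zero_of_ne (ζ := 1) (ξ := -1) (by simp)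
        (by norm_num)).comp tendsto_ofReal_nhdsLT_one
      simpa using hφ.sub hid
    have hbig := tendsto_poissonKernel_zero_ofReal_one.const_mul_atTop
      (abs_pos.mpr (sub_ne_zero.mpr hc))
    obtain ⟨r, hr, hrK, hrs, hrsplit⟩ := ((hbig.eventually_gt_atTop (K + 1)).and
      (hK.and ((hs.eventually (Ioo_mem_nhds neg_one_lt_zero one_pos)).and hsplit))).exists
    have h1 : |c - 1| * poissonKernel 0 r 1 ≤ |(c - 1) * poissonKernel 0 r 1| := by
      rw [abs_mul]
      exact mul_le_mul_of_nonneg_left (le_abs_self _) (abs_nonneg _)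
    rw [hrsplit] at h1
    have h2 := abs_sub (rho (η * mobius a r) - rho r) (s r)
    have h3 : |s r| < 1 := abs_lt.mpr hrs
    linarith
  have hpos : 0 < 1 - ‖a‖ ^ 2 := by nlinarith [norm_nonneg a]
  rw [div_eq_one_iff_eq hpos.ne', ← normSq_eq_norm_sq, ← normSq_eq_norm_sq] at hc
  simp only [normSq_apply, sub_re, sub_im, one_re, one_im] at hc ⊢
  linarith

lemma normSq_eq_re_of_abs_rho_sub_le (ha : ‖a‖ < 1) (hη : ‖η‖ = 1)
    (hK : ∀ᶠ r : ℝ in 𝓝[<] 1, |rho (η * mobius a r) - rho r| ≤ K) :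
    normSq a = a.re := by
  rcases mul_mobius_one_eq_one_or_neg_one_of_abs_rho_sub_le ha hη hK with h | h
  · exact normSq_eq_re_of_mul_mobius_one_eq_one ha hη h hK
  · refine normSq_eq_re_of_mul_mobius_one_eq_one (η := -η) (K := K) ha (by rwa [norm_neg])
      (by rw [neg_mul, h, neg_neg]) ?_
    simpa only [neg_mul, rho_neg] using hK

theorem eq_zero_and_eq_neg_one_or_one_of_abs_rho_sub_le (ha : ‖a‖ < 1) (hη : ‖η‖ = 1)
    (hK : ∀ z : ℂ, ‖z‖ < 1 → |rho (η * mobius a z) - rho z| ≤ K) :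
    a = 0 ∧ (η = -1 ∨ η = 1) := by
  have hre := normSq_eq_re_of_abs_rho_sub_le ha hη (eventually_nhdsLT_one_of_forall_norm_lt_one hK)
  -- `z ↦ φ (-z)` is the Möbius map with parameters `-a, -η`, and `rho` is even
  have hre_neg : normSq (-a) = (-a).re := by
    refine normSq_eq_re_of_abs_rho_sub_le (η := -η) (K := K) (by rwa [norm_neg]) (by rwa [norm_neg])
      (eventually_nhdsLT_one_of_forall_norm_lt_one
        (p := fun z => |rho (-η * mobius (-a) z) - rho z| ≤ K) fun z hz => ?_)
    simpa only [mul_mobius_neg, rho_neg] using hK (-z) (by rwa [norm_neg])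
  have ha0 : a = 0 := by
    rw [normSq_neg, neg_re] at hre_neg
    exact normSq_eq_zero.mp (by linarith)
  subst ha0
  have h := mul_mobius_one_eq_one_or_neg_one_of_abs_rho_sub_le ha hη
    (eventually_nhdsLT_one_of_forall_norm_lt_one hK)
  simp only [mobius, map_zero, sub_zero, zero_sub, div_one, mul_neg, mul_one,
    neg_eq_iff_eq_neg, neg_neg] at h
  exact ⟨rfl, h⟩

end Rigidity

section CompositionOperator

lemma mem_psiH_self (ψ : 𝔻 → ℂ) : ψ ∈ psiH ψ :=
  ⟨fun _ => 1, ⟨⟨fun _ => 1, differentiableOn_const 1, fun _ => rfl⟩, 1, fun _ => by simp⟩,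
    by simp⟩

lemma MemHinf.comp {g : 𝔻 → ℂ} (hg : MemHinf g) {φ : 𝔻 → 𝔻} (hφ : HolOn fun z => (φ z : ℂ)) :
    MemHinf (g ∘ φ) := by
  obtain ⟨⟨Fg, hFg, hg⟩, M, hM⟩ := hg
  obtain ⟨Fφ, hFφ, hφ⟩ := hφ
  have hmaps : MapsTo Fφ (ball 0 1) (ball 0 1) := fun z hz => by
    have h := hφ (.mk z (mem_ball_zero_iff.mp hz))
    rw [UnitDisc.coe_mk] at h
    rw [mem_ball_zero_iff, h]
    exact (φ _).norm_lt_one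
  exact ⟨⟨Fg ∘ Fφ, hFg.comp hFφ hmaps, fun z => by simp [hφ, hg]⟩, M, fun z => hM (φ z)⟩

lemma comp_mem_psiH {ψ : 𝔻 → ℂ} {φ : 𝔻 → 𝔻} (hφ : HolOn fun z => (φ z : ℂ))
    (hψ : ∀ z, ψ (φ z) = ψ z) {f : 𝔻 → ℂ} (hf : f ∈ psiH ψ) : f ∘ φ ∈ psiH ψ := by
  obtain ⟨g, hg, rfl⟩ := hf
  exact ⟨g ∘ φ, hg.comp hφ, by ext z; simp [hψ]⟩

lemma compAutOn_of_involutive {A : Set (𝔻 → ℂ)} {φ : 𝔻 → 𝔻} (hφ : Function.Involutive φ)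
    (hA : ∀ f ∈ A, f ∘ φ ∈ A) : CompAutOn A φ := by
  have hcomp : ∀ f : 𝔻 → ℂ, (f ∘ φ) ∘ φ = f := fun f => by ext z; simp [hφ z]
  refine ⟨hA, fun f _ g _ h => ?_, fun f hf => ⟨f ∘ φ, hA f hf, hcomp f⟩⟩
  rw [← hcomp f, ← hcomp g]
  exact congrArg (· ∘ φ) h

lemma CompAutOn.exists_norm_le {ψ : 𝔻 → ℂ} {φ : 𝔻 → 𝔻} (h : CompAutOn (psiH ψ) φ) :
    ∃ M, ∀ z, ‖ψ (φ z)‖ ≤ M * ‖ψ z‖ ∧ ‖ψ z‖ ≤ M * ‖ψ (φ z)‖ := by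
  obtain ⟨g, ⟨-, Mg, hMg⟩, hg⟩ := h.1 ψ (mem_psiH_self ψ)
  obtain ⟨f, ⟨u, ⟨-, Mu, hMu⟩, rfl⟩, hf⟩ := h.2.2 (mem_psiH_self ψ)
  refine ⟨max Mg Mu, fun z => ⟨?_, ?_⟩⟩
  · rw [show ψ (φ z) = ψ z * g z from congrFun hg z, norm_mul, mul_comm]
    exact mul_le_mul_of_nonneg_right ((hMg z).trans (le_max_left _ _)) (norm_nonneg _)
  · rw [show ψ z = ψ (φ z) * u (φ z) from (congrFun hf z).symm, norm_mul, mul_comm]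
    exact mul_le_mul_of_nonneg_right ((hMu _).trans (le_max_right _ _)) (norm_nonneg _)

end CompositionOperator

lemma abs_sub_le_log_of_exp_neg_le {u v M : ℝ} (h₁ : Real.exp (-u) ≤ M * Real.exp (-v))
    (h₂ : Real.exp (-v) ≤ M * Real.exp (-u)) : |u - v| ≤ Real.log M := by
  have hM : 0 < M := pos_of_mul_pos_left ((Real.exp_pos _).trans_le h₁) (Real.exp_pos _).le
  rw [← Real.exp_log hM, ← Real.exp_add, Real.exp_le_exp] at h₁ h₂
  exact abs_sub_le_iff.mpr ⟨by linarith, by linarith⟩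

noncomputable def psi (z : ℂ) : ℂ := exp ((z + 1) / (z - 1)) * exp ((z - 1) / (z + 1))

lemma norm_psi (z : ℂ) : ‖psi z‖ = Real.exp (-rho z) := by
  have h₁ : (z + 1) / (z - 1) = -((1 + z) / (1 - z)) := by
    rw [show (1 : ℂ) - z = -(z - 1) by ring, div_neg, neg_neg, add_comm]
  have h₂ : (z - 1) / (z + 1) = -((-1 + z) / (-1 - z)) := by
    rw [show (-1 : ℂ) - z = -(z + 1) by ring, div_neg, neg_neg, neg_add_eq_sub]
  rw [psi, norm_mul, norm_exp, norm_exp, ← Real.exp_add, h₁, h₂, rho,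
    poissonKernel_zero_eq_re, poissonKernel_zero_eq_re, neg_re, neg_re, neg_add]

lemma psi_neg (z : ℂ) : psi (-z) = psi z := by
  rw [psi, psi, mul_comm, show -z + 1 = -(z - 1) by ring, show -z - 1 = -(z + 1) by ring,
    neg_div_neg_eq, neg_div_neg_eq]

lemma CompAutOn.exists_abs_rho_sub_le {φ : 𝔻 → 𝔻} (h : CompAutOn (psiH fun z => psi z) φ) :
    ∃ K, ∀ z : 𝔻, |rho (φ z) - rho z| ≤ K := by
  obtain ⟨M, hM⟩ := h.exists_norm_le
  exact ⟨Real.log M, fun z => abs_sub_le_log_of_exp_neg_le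
    (by simpa only [norm_psi] using (hM z).1) (by simpa only [norm_psi] using (hM z).2)⟩

/-- for `ψ(z) = exp((z+1)/(z-1)) exp((z-1)/(z+1))` and `φ ∈ Aut(𝔻)`,
the composition operator `C_φ` is a well-defined algebra automorphism of `ψ H^∞` iff
`φ = z` or `φ = -z`. -/
theorem stmt_18 (φ : 𝔻 → 𝔻) (hφ : IsDiscAut φ) :
    CompAutOn
        (psiH (fun z : 𝔻 =>
          Complex.exp (((z : ℂ) + 1) / ((z : ℂ) - 1)) *
            Complex.exp (((z : ℂ) - 1) / ((z : ℂ) + 1)))) φ ↔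
      (∀ z : 𝔻, φ z = z) ∨ (∀ z : 𝔻, (↑(φ z) : ℂ) = -(z : ℂ)) := by
  change CompAutOn (psiH fun z => psi z) φ ↔ _
  constructor
  · intro hC
    obtain ⟨a, η, ha, hη, hφa⟩ := hφ.exists_eq_mul_mobius
    obtain ⟨K, hK⟩ := hC.exists_abs_rho_sub_le
    obtain ⟨rfl, rfl | rfl⟩ := eq_zero_and_eq_neg_one_or_one_of_abs_rho_sub_le ha hη (K := K)
      fun z hz => by simpa [hφa] using hK (.mk z hz)
    · left
      intro z
      apply UnitDisc.coe_injective
      simp [hφa, mobius]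
    · right
      intro z
      simp [hφa, mobius]
  · rintro (h | h)
    · exact compAutOn_of_involutive (fun z => by rw [h, h])
        (fun f hf => comp_mem_psiH hφ.1 (fun z => by rw [h]) hf)
    · exact compAutOn_of_involutive (fun z => UnitDisc.coe_injective (by rw [h, h, neg_neg]))
        (fun f hf => comp_mem_psiH hφ.1 (fun z => by rw [h, psi_neg]) hf)
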